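/- arXiv:1709.05881 — 3 statements merged into one kernel-verified Lean document; each statement's English description precedes it below -/
import Mathlib

section
/- Let $R = \bigoplus_{n \in \mathbb{N}} R_n$ be a Noetherian $\mathbb{N}$-graded ring, let $L$ be a finitely generated $\mathbb{N}$-graded $R$-module, set $A := R_0$, and let $J$ be an ideal of $A$. Then there exists a positive integer $k$ such that for all $n \in \mathbb{N}$ and all $m \ge k$, $J^m L_n \cap H^0_J(L_n) = 0$, where $H^0_J(L_n) = \bigcup_{i \ge 1}(0 :_{L_n} J^i)$. -/
/-- The submodule of elements killed by `I ^ i`. -/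
def torPow (R M : Type) [CommRing R] [AddCommGroup M] [Module R M] (I : Ideal R) (i : ℕ) :
    Submodule R M where
  carrier := {x | ∀ r ∈ I ^ i, r • x = 0}
  add_mem' := fun hx hy r hr => by rw [smul_add, hx r hr, hy r hr, add_zero]
  zero_mem' := fun r _ => smul_zero r
  smul_mem' := fun c x hx r hr => by rw [smul_comm, hx r hr, smul_zero]

theorem torPow_mono (R M : Type) [CommRing R] [AddCommGroup M] [Module R M] (I : Ideal R) :
    Monotone (torPow R M I) := by
  intro i j hij x hx r hr
  exact hx r (Ideal.pow_le_pow_right hij hr)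

/-- **A uniform Artin–Rees type statement for torsion in graded pieces.**
Let `R = ⊕ₙ Rₙ` be a Noetherian `ℕ`-graded ring with degree zero part `A = R₀`, let
`L = ⊕ₙ Lₙ` be a finitely generated `ℕ`-graded `R`-module, and let `J` be an ideal of `A`.
Then there is a positive integer `k` such that `Jᵐ Lₙ ∩ H⁰_J(Lₙ) = 0` for all `n` and all
`m ≥ k`. -/
theorem stmt1 (A R M : Type) [CommRing A] [CommRing R] [Algebra A R]
    [AddCommGroup M] [Module R M] [Module A M] [IsScalarTower A R M]
    (𝒜 : ℕ → Submodule A R) [GradedAlgebra 𝒜] (h0 : 𝒜 0 = 1)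
    (ℳ : ℕ → Submodule A M) [DirectSum.Decomposition ℳ] [SetLike.GradedSMul 𝒜 ℳ]
    [IsNoetherianRing R] [Module.Finite R M]
    (J : Ideal A) :
    ∃ k : ℕ, 0 < k ∧ ∀ n m : ℕ, k ≤ m → ∀ x : M,
      x ∈ (J ^ m) • (ℳ n) → (∃ i : ℕ, ∀ a ∈ J ^ i, a • x = 0) → x = 0 := by
  classical
  haveI : IsNoetherian R M := inferInstance
  set I : Ideal R := J.map (algebraMap A R) with hI
  obtain ⟨c, hc⟩ := monotone_stabilizes_iff_noetherian.mpr ‹IsNoetherian R M›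
    ⟨torPow R M I, torPow_mono R M I⟩
  set N : Submodule R M := torPow R M I c with hN
  have hNall : ∀ i, torPow R M I i ≤ N := by
    intro i
    simpa using (hc (max i c) (le_max_right i c)).symm
  obtain ⟨k₀, hk₀⟩ := Ideal.exists_pow_inf_eq_pow_smul I N
  refine ⟨k₀ + c + 1, Nat.succ_pos _, ?_⟩
  intro n m hm x hxJ hxtor
  -- x lies in the I-power torsion submodule N
  have hxN : x ∈ N := by
    obtain ⟨i, hi⟩ := hxtor
    refine hNall i ?_
    intro r hr
    have : r ∈ (J ^ i).map (algebraMap A R) := by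
      rwa [← Ideal.map_pow] at hr
    refine Submodule.span_induction ?_ ?_ ?_ ?_ this
    · rintro _ ⟨a, ha, rfl⟩
      rw [algebraMap_smul]
      exact hi a ha
    · exact zero_smul R x
    · intro r s _ _ hrx hsx
      rw [add_smul, hrx, hsx, add_zero]
    · intro r s _ hsx
      rw [smul_assoc, hsx, smul_zero]
  -- x lies in I ^ m • ⊤
  have hxI : x ∈ (I ^ m • ⊤ : Submodule R M) := by
    refine Submodule.smul_induction_on hxJ ?_ ?_
    · intro a ha y _
      have : (algebraMap A R a) ∈ I ^ m := by
        rw [hI, ← Ideal.map_pow]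
        exact Ideal.mem_map_of_mem _ ha
      have := Submodule.smul_mem_smul this (Submodule.mem_top (x := y))
      rwa [algebraMap_smul] at this
    · intro y z hy hz
      exact Submodule.add_mem _ hy hz
  have key : x ∈ I ^ (m - k₀) • (I ^ k₀ • ⊤ ⊓ N) := by
    rw [← hk₀ m (by omega)]
    exact ⟨hxI, hxN⟩
  have hle : I ^ (m - k₀) • (I ^ k₀ • ⊤ ⊓ N) ≤ I ^ c • N :=
    Submodule.smul_mono (Ideal.pow_le_pow_right (by omega)) inf_le_right
  have hbot : I ^ c • N ≤ (⊥ : Submodule R M) := by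
    rw [Submodule.smul_le]
    intro r hr y hy
    simpa using hy r hr
  simpa using hbot (hle key)
end

section
/- Let $\mathscr{R} = \bigoplus_{n \ge 0} \mathscr{R}_n$ be a Noetherian standard $\mathbb{N}$-graded ring (i.e., generated over $\mathscr{R}_0$ by $\mathscr{R}_1$) and $\mathscr{M} = \bigoplus_{n \ge 0} \mathscr{M}_n$ a finitely generated $\mathbb{N}$-graded $\mathscr{R}$-module. Then there exists $j_0 \ge 0$ such that $\mathrm{ann}_{\mathscr{R}_0}(\mathscr{M}_j) = \mathrm{ann}_{\mathscr{R}_0}(\mathscr{M}_{j_0})$ for all $j \ge j_0$. -/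
open DirectSum Pointwise

section aux

variable {A R M : Type} [CommRing A] [CommRing R] [Algebra A R]
    [AddCommGroup M] [Module R M] [Module A M] [IsScalarTower A R M]
    (𝒜 : ℕ → Submodule A R) [GradedAlgebra 𝒜]
    (ℳ : ℕ → Submodule A M) [DirectSum.Decomposition ℳ] [SetLike.GradedSMul 𝒜 ℳ]

lemma aux_pow_le : ∀ n, (𝒜 1) ^ n ≤ 𝒜 n := by
  intro n
  induction n with
  | zero =>
    rw [pow_zero, Submodule.one_le]
    exact SetLike.one_mem_graded 𝒜
  | succ n ih =>
    rw [pow_succ]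
    exact Submodule.mul_le.2 fun r hr s hs => SetLike.mul_mem_graded (ih hr) hs

lemma aux_le_pow (hstd : Algebra.adjoin A ((𝒜 1 : Submodule A R) : Set R) = ⊤) :
    ∀ n, 𝒜 n ≤ (𝒜 1) ^ n := by
  have htop : (⊤ : Submodule A R) ≤ ⨆ n, (𝒜 1) ^ n := by
    have h1 : (⊤ : Submodule A R) =
        Submodule.span A (Submonoid.closure ((𝒜 1 : Submodule A R) : Set R)) := by
      rw [← Algebra.adjoin_eq_span, hstd]
      rfl
    rw [h1, Submodule.span_le]
    intro y hy
    have : ∃ n, y ∈ (𝒜 1) ^ n := by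
      induction hy using Submonoid.closure_induction with
      | mem z hz => exact ⟨1, by simpa [pow_one] using hz⟩
      | one =>
        refine ⟨0, ?_⟩
        rw [pow_zero, Submodule.one_eq_span]
        exact Submodule.mem_span_singleton_self 1
      | mul a b _ _ ha hb =>
        obtain ⟨m, hm⟩ := ha
        obtain ⟨k, hk⟩ := hb
        exact ⟨m + k, by rw [pow_add]; exact Submodule.mul_mem_mul hm hk⟩
    obtain ⟨n, hn⟩ := this
    exact SetLike.mem_coe.2 (Submodule.mem_iSup_of_mem n hn)
  intro n x hx
  have hx' : x ∈ ⨆ k, (𝒜 1) ^ k := htop trivial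
  have key : ((DirectSum.decompose 𝒜 x n : 𝒜 n) : R) ∈ (𝒜 1) ^ n := by
    refine Submodule.iSup_induction (motive := fun z => ((DirectSum.decompose 𝒜 z n : 𝒜 n) : R) ∈ (𝒜 1) ^ n)
      _ hx' ?_ ?_ ?_
    · intro k z hz
      by_cases hkn : k = n
      · subst hkn
        rw [DirectSum.decompose_of_mem_same 𝒜 (aux_pow_le 𝒜 k hz)]
        exact hz
      · rw [DirectSum.decompose_of_mem_ne 𝒜 (aux_pow_le 𝒜 k hz) hkn]
        exact zero_mem _
    · simp
    · intro a b ha hb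
      rw [DirectSum.decompose_add]
      simpa using add_mem ha hb
  rwa [DirectSum.decompose_of_mem_same 𝒜 hx] at key

lemma aux_smul_span (hstd : Algebra.adjoin A ((𝒜 1 : Submodule A R) : Set R) = ⊤)
    (e : ℕ) {r : R} (hr : r ∈ 𝒜 (e + 1)) (d : ℕ) {y : M} (hy : y ∈ ℳ d) :
    r • y ∈ Submodule.span A (((𝒜 1 : Submodule A R) : Set R) • ((ℳ (d + e) : Submodule A M) : Set M)) := by
  have h1 : r ∈ (𝒜 1) * ((𝒜 1) ^ e) := by
    have h2 := aux_le_pow 𝒜 hstd (e + 1) hr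
    rwa [pow_succ'] at h2
  refine Submodule.mul_induction_on h1 ?_ ?_
  · intro u hu v hv
    have hvy : v • y ∈ ℳ (e + d) := SetLike.GradedSMul.smul_mem (aux_pow_le 𝒜 e hv) hy
    rw [mul_smul]
    refine Submodule.subset_span (Set.smul_mem_smul hu ?_)
    rwa [add_comm d e]
  · intro r₁ r₂ h₁ h₂
    rw [add_smul]
    exact add_mem h₁ h₂

end aux

set_option linter.unusedSectionVars false

section aux2

variable {A R M : Type} [CommRing A] [CommRing R] [Algebra A R]
    [AddCommGroup M] [Module R M] [Module A M] [IsScalarTower A R M]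
    (𝒜 : ℕ → Submodule A R) [GradedAlgebra 𝒜]
    (ℳ : ℕ → Submodule A M) [DirectSum.Decomposition ℳ] [SetLike.GradedSMul 𝒜 ℳ]

/-- the target span -/
abbrev auxS (j : ℕ) : Submodule A M :=
  Submodule.span A (((𝒜 1 : Submodule A R) : Set R) • ((ℳ j : Submodule A M) : Set M))

lemma aux_zero_smul {r' : R} (hr' : r' ∈ 𝒜 0) {j : ℕ} {z : M} (hz : z ∈ auxS 𝒜 ℳ j) :
    r' • z ∈ auxS 𝒜 ℳ j := by
  induction hz using Submodule.span_induction with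
  | mem w hw =>
    obtain ⟨u, hu, m, hm, rfl⟩ := hw
    have h1 : r' • u • m = u • (r' • m) := by
      rw [smul_smul, smul_smul, mul_comm]
    rw [h1]
    have h2 : r' • m ∈ ℳ (0 + j) := SetLike.GradedSMul.smul_mem hr' hm
    rw [zero_add] at h2
    exact Submodule.subset_span (Set.smul_mem_smul hu h2)
  | zero => simp
  | add x y _ _ hx hy => rw [smul_add]; exact add_mem hx hy
  | smul a z _ ih =>
    rw [smul_comm]
    exact Submodule.smul_mem _ a ih

lemma aux_hom (hstd : Algebra.adjoin A ((𝒜 1 : Submodule A R) : Set R) = ⊤)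
    {e : ℕ} {r' : R} (hr' : r' ∈ 𝒜 e) {x : M} {j : ℕ}
    (hx : ((DirectSum.decompose ℳ x (j + 1) : ℳ (j + 1)) : M) ∈ auxS 𝒜 ℳ j) :
    ((DirectSum.decompose ℳ (r' • x) (j + 1) : ℳ (j + 1)) : M) ∈ auxS 𝒜 ℳ j := by
  classical
  rw [← DirectSum.sum_support_decompose ℳ x, Finset.smul_sum,
    DirectSum.decompose_sum, DFinsupp.finset_sum_apply, AddSubmonoidClass.coe_finset_sum]
  refine Submodule.sum_mem _ ?_
  intro d _
  have hxd : ((DirectSum.decompose ℳ x d : ℳ d) : M) ∈ ℳ d := (DirectSum.decompose ℳ x d).2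
  have hmem : r' • ((DirectSum.decompose ℳ x d : ℳ d) : M) ∈ ℳ (e + d) :=
    SetLike.GradedSMul.smul_mem hr' hxd
  by_cases hed : e + d = j + 1
  · rw [hed] at hmem
    rw [DirectSum.decompose_of_mem_same ℳ hmem]
    match e, hed with
    | 0, hed =>
      have hd : d = j + 1 := by omega
      subst hd
      exact aux_zero_smul 𝒜 ℳ hr' hx
    | (e' + 1), hed =>
      have hde : d + e' = j := by omega
      have := aux_smul_span 𝒜 ℳ hstd e' hr' d hxd
      rwa [hde] at this
  · rw [DirectSum.decompose_of_mem_ne ℳ hmem hed]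
    simp

lemma aux_exists_N (hstd : Algebra.adjoin A ((𝒜 1 : Submodule A R) : Set R) = ⊤)
    [Module.Finite R M] :
    ∃ N : ℕ, ∀ j, N ≤ j → (ℳ (j + 1) : Submodule A M) ≤ auxS 𝒜 ℳ j := by
  classical
  obtain ⟨S, hS⟩ := Module.Finite.fg_top (R := R) (M := M)
  set N := S.sup (fun s => (DirectSum.decompose ℳ s).support.sup id) with hN
  refine ⟨N, ?_⟩
  have Qall : ∀ x : M, ∀ j, N ≤ j →
      ((DirectSum.decompose ℳ x (j + 1) : ℳ (j + 1)) : M) ∈ auxS 𝒜 ℳ j := by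
    intro x
    have hx : x ∈ Submodule.span R (S : Set M) := by rw [hS]; trivial
    induction hx using Submodule.span_induction with
    | mem s hs =>
      intro j hj
      have h1 : (j + 1) ∉ (DirectSum.decompose ℳ s).support := by
        intro hmem
        have h2 := Finset.le_sup (f := id) hmem
        have h3 : (DirectSum.decompose ℳ s).support.sup id ≤ N :=
          Finset.le_sup (f := fun s => (DirectSum.decompose ℳ s).support.sup id) hs
        simp only [id] at h2
        omega
      rw [DFinsupp.notMem_support_iff.1 h1]
      simp
    | zero => intro j hj; simp
    | add x y _ _ hx hy =>
      intro j hj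
      rw [DirectSum.decompose_add, DirectSum.add_apply, Submodule.coe_add]
      exact add_mem (hx j hj) (hy j hj)
    | smul r x _ ih =>
      intro j hj
      rw [← DirectSum.sum_support_decompose 𝒜 r, Finset.sum_smul,
        DirectSum.decompose_sum, DFinsupp.finset_sum_apply, AddSubmonoidClass.coe_finset_sum]
      refine Submodule.sum_mem _ ?_
      intro e _
      exact aux_hom 𝒜 ℳ hstd (DirectSum.decompose 𝒜 r e).2 (ih j hj)
  intro j hj m hm
  have h := Qall m j hj
  rwa [DirectSum.decompose_of_mem_same ℳ hm] at h

end aux2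

section aux3

variable {A R M : Type} [CommRing A] [CommRing R] [Algebra A R]
    [AddCommGroup M] [Module R M] [Module A M] [IsScalarTower A R M]
    (𝒜 : ℕ → Submodule A R) [GradedAlgebra 𝒜]
    (ℳ : ℕ → Submodule A M) [DirectSum.Decomposition ℳ] [SetLike.GradedSMul 𝒜 ℳ]

lemma aux_ann_mono (hstd : Algebra.adjoin A ((𝒜 1 : Submodule A R) : Set R) = ⊤)
    [Module.Finite R M] :
    ∃ N : ℕ, ∀ j j', N ≤ j → j ≤ j' →
      Module.annihilator A (ℳ j) ≤ Module.annihilator A (ℳ j') := by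
  obtain ⟨N, hN⟩ := aux_exists_N 𝒜 ℳ hstd
  refine ⟨N, ?_⟩
  have step : ∀ j, N ≤ j →
      Module.annihilator A (ℳ j) ≤ Module.annihilator A (ℳ (j + 1)) := by
    intro j hj a ha
    rw [Submodule.mem_annihilator] at ha ⊢
    intro m hm
    have hm' : m ∈ auxS 𝒜 ℳ j := hN j hj hm
    clear hm
    induction hm' using Submodule.span_induction with
    | mem w hw =>
      obtain ⟨u, hu, y, hy, rfl⟩ := hw
      rw [smul_comm, ha y hy, smul_zero]
    | zero => rw [smul_zero]
    | add x y _ _ hx hy => rw [smul_add, hx, hy, add_zero]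
    | smul b z _ ih => rw [smul_comm, ih, smul_zero]
  intro j j' hNj hjj'
  induction j', hjj' using Nat.le_induction with
  | base => exact le_rfl
  | succ k hk ih => exact le_trans ih (step k (le_trans hNj hk))

lemma aux_comap (j : ℕ) (a : A)
    (h : algebraMap A R a ∈
      Ideal.span (algebraMap A R '' (Module.annihilator A (ℳ j) : Set A))) :
    a ∈ Module.annihilator A (ℳ j) := by
  have key : ∀ x : R, x ∈
      Ideal.span (algebraMap A R '' (Module.annihilator A (ℳ j) : Set A)) →
      ∀ y ∈ ℳ j, x • y = (0 : M) := by
    intro x hx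
    induction hx using Submodule.span_induction with
    | mem w hw =>
      obtain ⟨b, hb, rfl⟩ := hw
      intro y hy
      rw [algebraMap_smul]
      exact Submodule.mem_annihilator.1 hb y hy
    | zero => intro y _; rw [zero_smul]
    | add x₁ x₂ _ _ h₁ h₂ => intro y hy; rw [add_smul, h₁ y hy, h₂ y hy, add_zero]
    | smul r x _ ih =>
      intro y hy
      rw [smul_eq_mul, mul_smul, ih y hy, smul_zero]
  rw [Submodule.mem_annihilator]
  intro y hy
  have := key _ h y hy
  rwa [algebraMap_smul] at this

end aux3

/-- **Stability of annihilators of graded pieces.**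
Let `ℛ = ⊕ₙ ℛₙ` be a Noetherian standard `ℕ`-graded ring (generated over `ℛ₀` by `ℛ₁`) and
`ℳ = ⊕ₙ ℳₙ` a finitely generated `ℕ`-graded `ℛ`-module.  Then there exists `j₀` such that
`ann_{ℛ₀}(ℳⱼ) = ann_{ℛ₀}(ℳ_{j₀})` for all `j ≥ j₀`. -/
theorem stmt3 (A R M : Type) [CommRing A] [CommRing R] [Algebra A R]
    [AddCommGroup M] [Module R M] [Module A M] [IsScalarTower A R M]
    (𝒜 : ℕ → Submodule A R) [GradedAlgebra 𝒜] (h0 : 𝒜 0 = 1)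
    (hstd : Algebra.adjoin A ((𝒜 1 : Submodule A R) : Set R) = ⊤)
    (ℳ : ℕ → Submodule A M) [DirectSum.Decomposition ℳ] [SetLike.GradedSMul 𝒜 ℳ]
    [IsNoetherianRing R] [Module.Finite R M] :
    ∃ j₀ : ℕ, ∀ j : ℕ, j₀ ≤ j →
      Module.annihilator A (ℳ j) = Module.annihilator A (ℳ j₀) := by
  obtain ⟨N, hmono⟩ := aux_ann_mono 𝒜 ℳ hstd
  set I : ℕ → Ideal A := fun j => Module.annihilator A (ℳ j) with hI
  set J : ℕ →o Ideal R :=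
    ⟨fun n => Ideal.span (algebraMap A R '' (I (N + n) : Set A)), by
      intro n m hnm
      exact Ideal.span_mono (Set.image_mono (hmono (N + n) (N + m)
        (Nat.le_add_right _ _) (by omega)))⟩ with hJ
  obtain ⟨n, hn⟩ := monotone_stabilizes_iff_noetherian.mpr inferInstance J
  refine ⟨N + n, ?_⟩
  intro j hj
  refine le_antisymm ?_ (hmono (N + n) j (Nat.le_add_right _ _) hj)
  intro a ha
  have h1 : algebraMap A R a ∈ J (j - N) := by
    have : N + (j - N) = j := by omega
    rw [hJ]
    show algebraMap A R a ∈ Ideal.span (algebraMap A R '' (I (N + (j - N)) : Set A))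
    rw [this]
    exact Ideal.subset_span ⟨a, ha, rfl⟩
  rw [← hn (j - N) (by omega)] at h1
  exact aux_comap ℳ (N + n) a h1
end

section
/- Let $(A,\mathfrak{m},k)$ be an Artinian local ring. If there is a surjective $A$-module homomorphism from a finite direct sum of syzygy modules of $k$ onto a nonzero $A$-module $L$ with $\mathrm{injdim}_A(L) < \infty$, then $A$ is a field. -/
open IsLocalRing DirectSum

/-- `S` is an `n`th syzygy module of `M` in a minimal free resolution over the local ring `A`. -/
def IsMinSyz (A : Type) [CommRing A] [IsLocalRing A] :
    ℕ → ModuleCat A → ModuleCat A → Prop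
  | 0, M, S => Nonempty (S ≃ₗ[A] M)
  | (n + 1), M, S => ∃ (F : ModuleCat A) (f : F →ₗ[A] M),
      Module.Free A F ∧ Module.Finite A F ∧ Function.Surjective f ∧
      (LinearMap.ker f ≤ (maximalIdeal A) • (⊤ : Submodule A F)) ∧
      IsMinSyz A n (ModuleCat.of A (LinearMap.ker f)) S

/-- `M` has injective dimension at most `n`: there is an injective coresolution
`0 → M → I⁰ → ⋯ → Iⁿ → 0`. -/
def InjDimLE (A : Type) [CommRing A] : ℕ → ModuleCat A → Prop
  | 0, M => Module.Injective A M
  | (n + 1), M => ∃ (I : ModuleCat A) (f : M →ₗ[A] I), Module.Injective A I ∧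
      Function.Injective f ∧ InjDimLE A n (ModuleCat.of A (I ⧸ LinearMap.range f))

section Aux


universe v

variable {A : Type} [CommRing A] [IsLocalRing A]

lemma smallA : Small.{v} A := ⟨⟨ULift.{v} A, ⟨Equiv.ulift.symm⟩⟩⟩

/-- Over a local ring, a nonzero element annihilating the maximal ideal "divides" every
socle element of an injective module. -/
lemma socle_div {C : Type v} [AddCommGroup C] [Module A C] (hC : Module.Injective A C)
    {x : A} (hx0 : x ≠ 0) (hx : ∀ a ∈ maximalIdeal A, x * a = 0)
    {c : C} (hc : ∀ a ∈ maximalIdeal A, a • c = 0) : ∃ c', x • c' = c := by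
  set h : A →ₗ[A] A := LinearMap.toSpanSingleton A A x with hh
  have hle : LinearMap.ker h ≤ LinearMap.ker (LinearMap.toSpanSingleton A C c) := by
    intro a ha
    have ha' : a * x = 0 := by
      simpa [hh, LinearMap.toSpanSingleton, smul_eq_mul] using ha
    simp only [LinearMap.mem_ker, LinearMap.toSpanSingleton_apply]
    by_cases hu : IsUnit a
    · exfalso
      obtain ⟨u, rfl⟩ := hu
      exact hx0 (by simpa using congrArg (fun y => (↑u⁻¹ : A) * y) ha')
    · exact hc a hu
  set φ : (A ⧸ LinearMap.ker h) →ₗ[A] C :=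
    Submodule.liftQ _ (LinearMap.toSpanSingleton A C c) hle with hφ
  set ι : (A ⧸ LinearMap.ker h) →ₗ[A] A := Submodule.liftQ _ h le_rfl with hι
  have hinj : Function.Injective ι := by
    rw [← LinearMap.ker_eq_bot, hι]
    exact Submodule.ker_liftQ_eq_bot _ _ _ le_rfl
  haveI : Small.{v} A := smallA
  haveI := hC
  obtain ⟨F, hF⟩ := Module.Injective.extension_property A C _ A ι hinj φ
  refine ⟨F 1, ?_⟩
  have h1 : ι (Submodule.Quotient.mk 1) = x := by
    rw [hι, Submodule.liftQ_apply, hh]; simp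
  calc x • F 1 = F x := by rw [← map_smul]; simp
    _ = F (ι (Submodule.Quotient.mk 1)) := by rw [h1]
    _ = φ (Submodule.Quotient.mk 1) := LinearMap.congr_fun hF _
    _ = c := by rw [hφ, Submodule.liftQ_apply]; simp



variable {A : Type} [CommRing A] [IsLocalRing A]

/-- An Artinian module killed by the maximal ideal is Noetherian. -/
lemma noeth_of_killed {M : Type} [AddCommGroup M] [Module A M] [IsArtinian A M]
    (h : ∀ a ∈ maximalIdeal A, ∀ m : M, a • m = 0) : IsNoetherian A M := by
  have htor : Module.IsTorsionBySet A M (maximalIdeal A) := fun x a => h a.1 a.2 x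
  letI : Module (ResidueField A) M := htor.module
  haveI : IsScalarTower A (ResidueField A) M := htor.isScalarTower
  haveI : IsArtinian (ResidueField A) M := isArtinian_of_tower A ‹IsArtinian A M›
  haveI : IsNoetherian (ResidueField A) M :=
    (IsSemisimpleModule.finite_tfae (R := ResidueField A) (M := M)).out 2 1 |>.mp ‹_›
  -- transfer back to A
  rw [isNoetherian_iff']
  set e : Submodule A M → Submodule (ResidueField A) M := fun N =>
    { carrier := N
      add_mem' := fun ha hb => N.add_mem ha hb
      zero_mem' := N.zero_mem
      smul_mem' := by
        rintro r m hm
        obtain ⟨a, ha⟩ := Ideal.Quotient.mk_surjective r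
        have h2 : r • m = a • m := by
          rw [← ha]; exact htor.mk_smul a m
        rw [h2]
        exact N.smul_mem a hm } with he
  have hmono : StrictMono e := by
    intro N₁ N₂ hlt
    refine ⟨fun m hm => hlt.1 hm, fun hle => hlt.2 ?_⟩
    intro m hm
    exact hle hm
  exact hmono.wellFoundedGT



variable {A : Type} [CommRing A] [IsLocalRing A]

lemma max_nilpotent [IsArtinianRing A] : ∃ N : ℕ, (maximalIdeal A) ^ N = ⊥ := by
  obtain ⟨N, hN⟩ := IsArtinianRing.isNilpotent_jacobson_bot (R := A)
  refine ⟨N, ?_⟩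
  rw [IsLocalRing.jacobson_eq_maximalIdeal ⊥ bot_ne_top] at hN
  simpa using hN

/-- A commutative Artinian local ring is Noetherian. -/
lemma artinian_local_noeth [IsArtinianRing A] : IsNoetherianRing A := by
  obtain ⟨N, hN⟩ := max_nilpotent (A := A)
  have key : ∀ i : ℕ, IsNoetherian A (A ⧸ ((maximalIdeal A) ^ i)) := by
    intro i
    induction i with
    | zero =>
      have : Subsingleton (A ⧸ ((maximalIdeal A) ^ 0)) := by
        rw [pow_zero, Ideal.one_eq_top]
        exact Submodule.Quotient.subsingleton_iff.mpr rfl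
      infer_instance
    | succ i IH =>
      set J : Ideal A := (maximalIdeal A) ^ (i + 1) with hJ
      set K : Ideal A := (maximalIdeal A) ^ i with hK
      have hJK : J ≤ K := Ideal.pow_le_pow_right (by omega)
      set Kbar : Submodule A (A ⧸ J) := Submodule.map J.mkQ K with hKbar
      rw [isNoetherian_iff_submodule_quotient Kbar]
      constructor
      · -- Kbar is killed by the maximal ideal and Artinian
        refine noeth_of_killed ?_
        intro a ha m
        obtain ⟨y, hy⟩ := m
        refine Subtype.ext ?_
        obtain ⟨z, hz, rfl⟩ := Submodule.mem_map.mp hy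
        show a • (J.mkQ z) = 0
        rw [← map_smul, Submodule.mkQ_apply, Submodule.Quotient.mk_eq_zero]
        show a • z ∈ J
        rw [hJ, pow_succ']
        exact Ideal.mul_mem_mul ha hz
      · -- quotient is A ⧸ K
        have e := Submodule.quotientQuotientEquivQuotient J K hJK
        exact isNoetherian_of_linearEquiv e.symm
  have := key N
  rw [hN] at this
  exact isNoetherian_of_linearEquiv (Submodule.quotEquivOfEqBot (⊥ : Ideal A) rfl)

lemma exists_socle_ring [IsArtinianRing A] :
    ∃ x : A, x ≠ 0 ∧ (∀ a ∈ maximalIdeal A, x * a = 0) ∧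
      (maximalIdeal A ≠ ⊥ → x ∈ maximalIdeal A) := by
  classical
  have hex : ∃ N : ℕ, (maximalIdeal A) ^ N = ⊥ := max_nilpotent
  set N := Nat.find hex with hNdef
  have hN : (maximalIdeal A) ^ N = ⊥ := Nat.find_spec hex
  have hN0 : N ≠ 0 := by
    intro h0
    rw [h0, pow_zero, Ideal.one_eq_top] at hN
    have h1 : (1 : A) ∈ ((⊥ : Ideal A)) := by rw [← hN]; exact Submodule.mem_top
    rw [Ideal.mem_bot] at h1
    exact one_ne_zero (α := A) h1
  obtain ⟨m, hNm⟩ : ∃ m, N = m + 1 := ⟨N - 1, by omega⟩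
  rw [hNm] at hN
  have hm : (maximalIdeal A) ^ m ≠ ⊥ := Nat.find_min hex (by omega)
  obtain ⟨x, hxmem, hx0⟩ := Submodule.exists_mem_ne_zero_of_ne_bot hm
  refine ⟨x, hx0, fun a ha => ?_, fun hmb => ?_⟩
  · have : x * a ∈ (maximalIdeal A) ^ (m + 1) := by
      rw [pow_succ]
      exact Ideal.mul_mem_mul hxmem ha
    rwa [hN, Ideal.mem_bot] at this
  · rcases Nat.eq_zero_or_pos m with h | h
    · subst h
      -- m = 0
      exfalso
      rw [pow_one] at hN
      exact hmb hN
    · exact Ideal.pow_le_self (by omega) hxmem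

/-- Key lifting lemma: given a surjection `π : I → C` with `C` and `I` injective over an
Artinian local ring, every element of `C` killed by an ideal `J` lifts to an element of `I`
killed by `J`. -/
lemma lift_ideal [IsArtinianRing A] {I C : Type v} [AddCommGroup I] [Module A I]
    [AddCommGroup C] [Module A C] (π : I →ₗ[A] C) (hπ : Function.Surjective π)
    (hI : Module.Injective A I) (hC : Module.Injective A C) :
    ∀ (J : Ideal A) (c : C), (∀ a ∈ J, a • c = 0) → ∃ i, π i = c ∧ ∀ a ∈ J, a • i = 0 := by
  classical
  obtain ⟨x, hx0, hx, -⟩ := exists_socle_ring (A := A)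
  haveI : IsNoetherianRing A := artinian_local_noeth
  obtain ⟨Nn, hNn⟩ := max_nilpotent (A := A)
  intro J
  induction J using IsNoetherian.induction with
  | _ J IH =>
  intro c hc
  by_cases hJtop : J = ⊤
  · refine ⟨0, ?_, fun a _ => smul_zero a⟩
    rw [map_zero]
    have := hc 1 (hJtop ▸ Submodule.mem_top)
    rw [one_smul] at this
    exact this.symm
  · -- find a "socle element mod J"
    have hex : ∃ n : ℕ, (maximalIdeal A) ^ n ≤ J := ⟨Nn, by rw [hNn]; exact bot_le⟩
    have hn0 : Nat.find hex ≠ 0 := by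
      intro h0
      have := Nat.find_spec hex
      rw [h0, pow_zero, Ideal.one_eq_top] at this
      exact hJtop (top_le_iff.mp this)
    obtain ⟨m, hm⟩ : ∃ m, Nat.find hex = m + 1 := ⟨Nat.find hex - 1, by omega⟩
    have hnotle : ¬ (maximalIdeal A) ^ m ≤ J := Nat.find_min hex (by omega)
    obtain ⟨t, htm, htJ⟩ := SetLike.not_le_iff_exists.mp hnotle
    have hspec : (maximalIdeal A) ^ (m + 1) ≤ J := by rw [← hm]; exact Nat.find_spec hex
    have hmt : ∀ a ∈ maximalIdeal A, a * t ∈ J := by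
      intro a ha
      refine hspec ?_
      rw [pow_succ']
      exact Ideal.mul_mem_mul ha htm
    -- the element t • c is killed by the maximal ideal
    have hd : ∀ a ∈ maximalIdeal A, a • (t • c) = 0 := by
      intro a ha
      rw [smul_smul]
      exact hc _ (hmt a ha)
    -- lift t • c to a socle element i₁ of I
    obtain ⟨c₀, hc₀⟩ := socle_div hC hx0 hx hd
    obtain ⟨i₀, hi₀⟩ := hπ c₀
    set i₁ : I := x • i₀ with hi₁def
    have hπi₁ : π i₁ = t • c := by rw [hi₁def, map_smul, hi₀, hc₀]
    have hmi₁ : ∀ a ∈ maximalIdeal A, a • i₁ = 0 := by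
      intro a ha
      rw [hi₁def, smul_smul, mul_comm, hx a ha, zero_smul]
    -- construct w : an element with J • w = 0 and t • w = i₁, using injectivity of I
    set tbar : A ⧸ J := Submodule.Quotient.mk t with htbar
    set h₂ : A →ₗ[A] A ⧸ J := LinearMap.toSpanSingleton A _ tbar with hh₂
    have hle₂ : LinearMap.ker h₂ ≤ LinearMap.ker (LinearMap.toSpanSingleton A I i₁) := by
      intro a ha
      rw [LinearMap.mem_ker, hh₂, LinearMap.toSpanSingleton_apply, htbar,
        ← Submodule.Quotient.mk_smul, Submodule.Quotient.mk_eq_zero, smul_eq_mul] at ha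
      rw [LinearMap.mem_ker, LinearMap.toSpanSingleton_apply]
      by_cases hu : IsUnit a
      · exfalso
        obtain ⟨u, rfl⟩ := hu
        exact htJ (by simpa using Ideal.mul_mem_left J (↑u⁻¹ : A) ha)
      · exact hmi₁ a hu
    set φ₂ : (A ⧸ LinearMap.ker h₂) →ₗ[A] I :=
      Submodule.liftQ _ (LinearMap.toSpanSingleton A I i₁) hle₂ with hφ₂
    set ι₂ : (A ⧸ LinearMap.ker h₂) →ₗ[A] A ⧸ J := Submodule.liftQ _ h₂ le_rfl with hι₂
    have hinj₂ : Function.Injective ι₂ := by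
      rw [← LinearMap.ker_eq_bot, hι₂]
      exact Submodule.ker_liftQ_eq_bot _ _ _ le_rfl
    haveI : Small.{v} A := smallA
    haveI := hI
    obtain ⟨b, hb⟩ := Module.Injective.extension_property A I _ _ ι₂ hinj₂ φ₂
    have hb' : ∀ y, b (ι₂ y) = φ₂ y := fun y => LinearMap.congr_fun hb y
    set w : I := b (Submodule.Quotient.mk 1) with hw
    have hJw : ∀ a ∈ J, a • w = 0 := by
      intro a ha
      rw [hw, ← map_smul, ← Submodule.Quotient.mk_smul, smul_eq_mul, mul_one]
      rw [show (Submodule.Quotient.mk a : A ⧸ J) = 0 from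
        (Submodule.Quotient.mk_eq_zero J).mpr ha, map_zero]
    have htw : t • w = i₁ := by
      have e1 : (Submodule.Quotient.mk t : A ⧸ J) = ι₂ (Submodule.Quotient.mk 1) := by
        rw [hι₂, Submodule.liftQ_apply, hh₂, LinearMap.toSpanSingleton_apply, htbar]
        simp
      rw [hw, ← map_smul, ← Submodule.Quotient.mk_smul, smul_eq_mul, mul_one, e1, hb',
        hφ₂, Submodule.liftQ_apply, LinearMap.toSpanSingleton_apply, one_smul]
    -- apply the inductive hypothesis to the strictly bigger ideal J ⊔ (t)
    set J' : Ideal A := J ⊔ Ideal.span {t} with hJ'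
    have hJJ' : J < J' := by
      refine lt_of_le_of_ne le_sup_left ?_
      intro hEq
      have : t ∈ J' := Submodule.mem_sup_right (Ideal.subset_span (Set.mem_singleton t))
      exact htJ (hEq ▸ this)
    have hc₂ : ∀ a ∈ J', a • (c - π w) = 0 := by
      intro a ha
      rw [hJ', Submodule.mem_sup] at ha
      obtain ⟨u, hu, v, hv, rfl⟩ := ha
      obtain ⟨r, rfl⟩ := Ideal.mem_span_singleton'.mp hv
      have h1 : u • (c - π w) = 0 := by
        rw [smul_sub, hc u hu, ← map_smul, hJw u hu, map_zero, sub_zero]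
      have h2 : (r * t) • (c - π w) = 0 := by
        rw [smul_sub, mul_smul, mul_smul, ← map_smul, htw, hπi₁, sub_self]
      rw [add_smul, h1, h2, add_zero]
    obtain ⟨v, hv1, hv2⟩ := IH J' hJJ' (c - π w) hc₂
    refine ⟨w + v, ?_, ?_⟩
    · rw [map_add, hv1]; abel
    · intro a ha
      rw [smul_add, hJw a ha, hv2 a (Submodule.mem_sup_left ha), add_zero]

/-- If `M` embeds into an injective module `I` with injective cokernel, then `M` is injective
(over an Artinian local ring). -/
lemma step_injective [IsArtinianRing A] {M I : Type v} [AddCommGroup M] [Module A M]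
    [AddCommGroup I] [Module A I] (e : M →ₗ[A] I) (he : Function.Injective e)
    (hI : Module.Injective A I) (hC : Module.Injective A (I ⧸ LinearMap.range e)) :
    Module.Injective A M := by
  refine Module.Baer.injective ?_
  intro J g
  set π : I →ₗ[A] (I ⧸ LinearMap.range e) := (LinearMap.range e).mkQ with hπdef
  have hπ : Function.Surjective π := Submodule.mkQ_surjective _
  haveI : Small.{v} A := smallA
  haveI := hI
  obtain ⟨G₁, hG₁⟩ := Module.Injective.extension_property A I _ A
    (J.subtype) (Submodule.injective_subtype J) (e ∘ₗ g)
  set c : I ⧸ LinearMap.range e := π (G₁ 1) with hcdef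
  have hc : ∀ a ∈ J, a • c = 0 := by
    intro a ha
    have h1 : a • c = π (G₁ a) := by
      rw [hcdef, ← map_smul, ← map_smul]
      norm_num
    have h2 : G₁ a = e (g ⟨a, ha⟩) := LinearMap.congr_fun hG₁ ⟨a, ha⟩
    rw [h1, h2, hπdef, Submodule.mkQ_apply, Submodule.Quotient.mk_eq_zero]
    exact LinearMap.mem_range_self e _
  obtain ⟨i, hi1, hi2⟩ := lift_ideal π hπ hI hC J c hc
  set G₂ : A →ₗ[A] I := G₁ - LinearMap.toSpanSingleton A I i with hG₂
  have hmem : ∀ a : A, G₂ a ∈ LinearMap.range e := by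
    intro a
    have : π (G₂ a) = 0 := by
      rw [hG₂]
      simp only [LinearMap.sub_apply, map_sub, LinearMap.toSpanSingleton_apply]
      rw [map_smul, hi1]
      have : π (G₁ a) = a • c := by rw [hcdef, ← map_smul, ← map_smul]; norm_num
      rw [this, sub_self]
    rwa [hπdef, Submodule.mkQ_apply, Submodule.Quotient.mk_eq_zero] at this
  set Gr : A →ₗ[A] LinearMap.range e := G₂.codRestrict _ hmem with hGr
  set G : A →ₗ[A] M :=
    ((LinearEquiv.ofInjective e he).symm.toLinearMap) ∘ₗ Gr with hG
  refine ⟨G, fun a ha => ?_⟩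
  apply he
  have h3 : e (G a) = G₂ a := by
    rw [hG]
    simp only [LinearMap.coe_comp, Function.comp_apply, LinearEquiv.coe_coe]
    have := (LinearEquiv.ofInjective e he).apply_symm_apply (Gr a)
    calc e (((LinearEquiv.ofInjective e he).symm) (Gr a))
        = ((LinearEquiv.ofInjective e he) (((LinearEquiv.ofInjective e he).symm) (Gr a)) : I) := rfl
      _ = ((Gr a : LinearMap.range e) : I) := by rw [this]
      _ = G₂ a := rfl
  rw [h3, hG₂]
  simp only [LinearMap.sub_apply, LinearMap.toSpanSingleton_apply]
  rw [hi2 a ha, sub_zero]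
  exact LinearMap.congr_fun hG₁ ⟨a, ha⟩

lemma injdim_injective [IsArtinianRing A] :
    ∀ (n : ℕ) (M : ModuleCat A), InjDimLE A n M → Module.Injective A M := by
  intro n
  induction n with
  | zero =>
    intro M h
    exact h
  | succ n IH =>
    intro M h
    obtain ⟨I, f, hI, hf, hrec⟩ := h
    exact step_injective f hf hI (IH _ hrec)

lemma syz_killed {x : A} (hx : ∀ a ∈ maximalIdeal A, x * a = 0) :
    ∀ (n : ℕ) (M S : ModuleCat A), IsMinSyz A n M S → (∀ m : M, x • m = 0) →
      ∀ s : S, x • s = 0 := by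
  intro n
  induction n with
  | zero =>
    rintro M S ⟨e⟩ hM s
    have h0 : e (x • s) = 0 := by rw [map_smul, hM]
    exact (LinearEquiv.map_eq_zero_iff e).mp h0
  | succ n IH =>
    rintro M S ⟨F, f, _, _, hsurj, hker, hsyz⟩ hM s
    refine IH _ _ hsyz ?_ s
    intro m
    obtain ⟨m, hm⟩ := m
    have hm' : m ∈ (maximalIdeal A) • (⊤ : Submodule A F) := hker hm
    have hxm : x • m = 0 := by
      refine Submodule.smul_induction_on hm' ?_ ?_
      · intro a ha u _
        rw [smul_smul, hx a ha, zero_smul]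
      · intro u v hu hv
        rw [smul_add, hu, hv, add_zero]
    exact Subtype.ext hxm

lemma exists_socle_module [IsArtinianRing A] {M : Type v} [AddCommGroup M] [Module A M]
    {m₀ : M} (hm : m₀ ≠ 0) : ∃ l : M, l ≠ 0 ∧ ∀ a ∈ maximalIdeal A, a • l = 0 := by
  classical
  obtain ⟨N, hN⟩ := max_nilpotent (A := A)
  have hex : ∃ s : ℕ, ∀ c ∈ (maximalIdeal A) ^ s, c • m₀ = (0 : M) := by
    refine ⟨N, fun c hc => ?_⟩
    rw [hN, Ideal.mem_bot] at hc
    rw [hc, zero_smul]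
  have hs0 : Nat.find hex ≠ 0 := by
    intro h0
    have hsp := Nat.find_spec hex
    rw [h0] at hsp
    have h1 : (1 : A) ∈ (maximalIdeal A) ^ 0 := by
      rw [pow_zero, Ideal.one_eq_top]; trivial
    exact hm (by simpa using hsp 1 h1)
  obtain ⟨r, hr⟩ : ∃ r, Nat.find hex = r + 1 := ⟨Nat.find hex - 1, by omega⟩
  have hnot : ¬ ∀ c ∈ (maximalIdeal A) ^ r, c • m₀ = (0 : M) := Nat.find_min hex (by omega)
  push_neg at hnot
  obtain ⟨c, hcm, hc0⟩ := hnot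
  refine ⟨c • m₀, hc0, fun a ha => ?_⟩
  rw [smul_smul]
  refine Nat.find_spec hex (a * c) ?_
  rw [hr, pow_succ']
  exact Ideal.mul_mem_mul ha hcm

end Aux

/-- Let `(A, 𝔪, k)` be an Artinian local ring.  If a finite direct sum
`⊕_{n ∈ Λ} (Ωₙ(k))^{jₙ}` of syzygy modules of `k` maps onto a nonzero finitely generated
`A`-module `L` of finite injective dimension, then `A` is a field. -/
theorem stmt11 (A : Type) [CommRing A] [IsArtinianRing A] [IsLocalRing A]
    (Λ : Finset ℕ) (j : ℕ → ℕ) (hj : ∀ n ∈ Λ, 1 ≤ j n)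
    (S : ℕ → ModuleCat A)
    (hS : ∀ n ∈ Λ, IsMinSyz A n (ModuleCat.of A (ResidueField A)) (S n))
    (L : ModuleCat A) [Module.Finite A L] [Nontrivial L]
    (hLinj : ∃ n : ℕ, InjDimLE A n L)
    (f : (⨁ (n : Λ), (Fin (j n) → S n)) →ₗ[A] L)
    (hf : Function.Surjective f) :
    IsField A := by
  classical
  by_contra hF
  have hmb : maximalIdeal A ≠ ⊥ := fun h => hF (IsLocalRing.isField_iff_maximalIdeal_eq.mpr h)
  obtain ⟨x, hx0, hx, hxm'⟩ := exists_socle_ring (A := A)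
  have hxm : x ∈ maximalIdeal A := hxm' hmb
  obtain ⟨n, hn⟩ := hLinj
  have hLI : Module.Injective A L := injdim_injective n L hn
  -- x kills the residue field
  have hk' : ∀ m : ResidueField A, x • m = 0 := by
    intro m
    have h1 : x • m = (algebraMap A (ResidueField A) x) * m := Algebra.smul_def x m
    have h2 : algebraMap A (ResidueField A) x = 0 := Ideal.Quotient.eq_zero_iff_mem.mpr hxm
    rw [h1, h2, zero_mul]
  have hk : ∀ m : ↥(ModuleCat.of A (ResidueField A)), x • m = 0 := hk'
  -- x kills every syzygy in the sum
  have hSk : ∀ n ∈ Λ, ∀ s : ↥(S n), x • s = 0 := fun n hn' =>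
    syz_killed hx n _ _ (hS n hn') hk
  -- hence x kills L
  have hxL : ∀ l : ↥L, x • l = 0 := by
    intro l
    obtain ⟨m, rfl⟩ := hf l
    rw [← map_smul]
    have hm0 : x • m = 0 := by
      apply DFinsupp.ext
      intro i
      rw [DFinsupp.smul_apply, DFinsupp.zero_apply]
      funext t
      exact hSk i.1 i.2 (m i t)
    rw [hm0, map_zero]
  -- L has a nonzero socle element
  obtain ⟨l₀, hl₀⟩ := exists_ne (0 : ↥L)
  obtain ⟨l, hl, hml⟩ := exists_socle_module (A := A) (M := ↥L) hl₀
  obtain ⟨l', hl'⟩ := socle_div hLI hx0 hx hml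
  exact hl (by rw [← hl', hxL l'])
end
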